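/- Let X be a binomial random variable with t trials and success probability 1/2. For every ε ∈ (0, 1/2] with ε²t ≥ 6, it holds that Pr[X ≥ (t/2)(1+ε)] ≥ exp(−9ε²t/2). -/

import Mathlib

/-!
Bound the tail from below by the mass of the window `a ≤ k ≤ b := a + ⌊εt/8⌋`, where
`a = ⌈(t/2)(1+ε)⌉`. With `c = ⌊t/2⌋`, each weight of the window is at least the central weight
`C(t, c)/2^t ≥ 1/(4√t)` (from `16^n ≤ 4n·C(2n,n)²`) times `exp (-B(B+1)/D)`, where `B = b - c` and
`D = t - b + 1`: a step `j → j+1` multiplies the weight by `(t-j)/(j+1) ≥ exp (-(2(j-c)+2)/D)`.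
The window has about `εt/8` points, so the tail is at least `(ε√t/32)·exp (-B(B+1)/D)`; finally
`ε ≤ 1/2` and `ε²t ≥ 6` give `B(B+1)/D ≤ 9ε²t/2 - 3` and `ε√t/32 ≥ √6/32 ≥ e⁻³`.
-/

open MeasureTheory Real

namespace Nat

theorem sixteen_pow_le_four_mul_mul_centralBinom_sq {n : ℕ} (hn : 1 ≤ n) :
    16 ^ n ≤ 4 * n * centralBinom n ^ 2 := by
  induction n, hn using Nat.le_induction with
  | base => decide
  | succ n _ ih =>
    have hrec := succ_mul_centralBinom_succ n
    suffices 16 ^ (n + 1) * (n + 1) ≤ 4 * (n + 1) * centralBinom (n + 1) ^ 2 * (n + 1) from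
      Nat.le_of_mul_le_mul_right this n.succ_pos
    calc 16 ^ (n + 1) * (n + 1) ≤ 16 * (n + 1) * (4 * n * centralBinom n ^ 2) := by
          rw [pow_succ]; nlinarith
      _ ≤ 4 * (2 * (2 * n + 1) * centralBinom n) ^ 2 := by
          nlinarith [Nat.zero_le (centralBinom n ^ 2)]
      _ = 4 * (n + 1) * centralBinom (n + 1) ^ 2 * (n + 1) := by rw [← hrec]; ring

theorem four_pow_le_two_mul_sqrt_mul_centralBinom {n : ℕ} (hn : 1 ≤ n) :
    (4 : ℝ) ^ n ≤ 2 * √n * centralBinom n := by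
  have h := sixteen_pow_le_four_mul_mul_centralBinom_sq hn
  have hsq : ((4 : ℝ) ^ n) ^ 2 ≤ (2 * √n * centralBinom n) ^ 2 := by
    rw [mul_pow, mul_pow, sq_sqrt n.cast_nonneg, ← pow_mul, mul_comm n, pow_mul]
    exact_mod_cast (by norm_num; linarith : 16 ^ n ≤ 2 ^ 2 * n * centralBinom n ^ 2)
  exact (pow_le_pow_iff_left₀ (by positivity) (by positivity) two_ne_zero).1 hsq

theorem two_pow_le_four_mul_sqrt_mul_choose_half {t : ℕ} (ht : 2 ≤ t) :
    (2 : ℝ) ^ t ≤ 4 * √t * t.choose (t / 2) := by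
  set n := t / 2
  have hcentral : (centralBinom n : ℝ) ≤ t.choose n := by
    rw [centralBinom]; exact_mod_cast choose_le_choose n (by omega)
  have hsqrt : √(n : ℝ) ≤ √t := Real.sqrt_le_sqrt (by exact_mod_cast t.div_le_self 2)
  calc (2 : ℝ) ^ t ≤ 2 ^ (2 * n + 1) := pow_le_pow_right₀ one_le_two (by omega)
    _ = 2 * 4 ^ n := by rw [pow_succ, pow_mul]; ring
    _ ≤ 2 * (2 * √n * centralBinom n) :=
        by gcongr; exact four_pow_le_two_mul_sqrt_mul_centralBinom (by omega)
    _ ≤ 4 * √t * t.choose n := by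
        rw [← mul_assoc, ← mul_assoc]; gcongr; norm_num

theorem choose_mul_exp_neg_le_choose_succ {t j : ℕ} {u : ℝ} (hu : 0 ≤ u)
    (h : (j : ℝ) + 1 ≤ (1 + u) * (t - j)) :
    t.choose j * exp (-u) ≤ t.choose (j + 1) := by
  have hjt : j ≤ t := by
    by_contra! hlt
    have : (t : ℝ) - j < 0 := by rw [sub_neg]; exact_mod_cast hlt
    nlinarith
  have hrec : (t.choose (j + 1) : ℝ) * (j + 1) = t.choose j * (t - j) := by
    have := congrArg (Nat.cast : ℕ → ℝ) (choose_succ_right_eq t j)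
    push_cast [Nat.cast_sub hjt] at this
    exact this
  have hexp : exp (-u) * (1 + u) ≤ 1 := by
    rw [exp_neg, inv_mul_le_iff₀ (exp_pos u), mul_one, add_comm]; exact add_one_le_exp u
  refine le_of_mul_le_mul_right ?_ (by positivity : (0 : ℝ) < j + 1)
  calc t.choose j * exp (-u) * (j + 1) ≤ t.choose j * exp (-u) * ((1 + u) * (t - j)) := by
        gcongr
    _ = t.choose j * (t - j) * (exp (-u) * (1 + u)) := by ring
    _ ≤ t.choose j * (t - j) :=
        mul_le_of_le_one_right
          (mul_nonneg (by positivity) (sub_nonneg.2 (by exact_mod_cast hjt))) hexp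
    _ = t.choose (j + 1) * (j + 1) := hrec.symm

-- `D` bounds `t - j` from below all along the path `c ≤ j < c + d`.
theorem choose_mul_exp_neg_le_choose_add {t c : ℕ} (hc : 2 * c ≤ t + 1) {D : ℝ} (hD : 0 < D)
    (d : ℕ) (hdD : D ≤ t - (c + d) + 1) :
    t.choose c * exp (-(d * (d + 1)) / D) ≤ t.choose (c + d) := by
  induction d with
  | zero => simp
  | succ d ih =>
    push_cast at hdD
    set u := (2 * d + 2) / D
    have hexp : exp (-((d + 1 : ℕ) * ((d + 1 : ℕ) + 1)) / D) =
        exp (-(d * (d + 1)) / D) * exp (-u) := by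
      rw [← exp_add]; congr 1; simp only [u]; field_simp; push_cast; ring
    have hstep : ((c + d : ℕ) : ℝ) + 1 ≤ (1 + u) * (t - (c + d : ℕ)) := by
      have hc' : (2 * c : ℝ) ≤ t + 1 := by exact_mod_cast hc
      have : 2 * d + 2 ≤ u * (t - (c + d)) := by
        calc (2 * d + 2 : ℝ) = u * D := (div_mul_cancel₀ _ hD.ne').symm
          _ ≤ u * (t - (c + d)) := by gcongr; linarith
      push_cast; linarith
    calc t.choose c * exp (-((d + 1 : ℕ) * ((d + 1 : ℕ) + 1)) / D)
        = t.choose c * exp (-(d * (d + 1)) / D) * exp (-u) := by rw [hexp, mul_assoc]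
      _ ≤ t.choose (c + d) * exp (-u) := by gcongr; exact ih (by linarith)
      _ ≤ t.choose (c + d + 1) := choose_mul_exp_neg_le_choose_succ (by positivity) hstep

theorem exp_neg_div_le_choose_div_two_pow {t b k : ℕ} (ht : 2 ≤ t) (hk : t / 2 ≤ k)
    (hkb : k ≤ b) (hbt : b ≤ t) :
    exp (-((b - (t / 2 : ℕ)) * (b - (t / 2 : ℕ) + 1)) / (t - b + 1)) / (4 * √t) ≤
      t.choose k / 2 ^ t := by
  obtain ⟨d, rfl⟩ := Nat.exists_eq_add_of_le hk
  have hD : (0 : ℝ) < t - b + 1 := by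
    have : (b : ℝ) ≤ t := by exact_mod_cast hbt
    linarith
  have hd : (d : ℝ) ≤ b - (t / 2 : ℕ) := by
    rw [le_sub_iff_add_le']; exact_mod_cast hkb
  have hmid : 1 / (4 * √t) ≤ t.choose (t / 2) / (2 : ℝ) ^ t := by
    rw [div_le_div_iff₀ (by positivity) (by positivity), one_mul, mul_comm]
    exact two_pow_le_four_mul_sqrt_mul_choose_half ht
  have hratio := choose_mul_exp_neg_le_choose_add (t := t) (c := t / 2) (by omega) hD d
    (by linarith)
  calc exp (-((b - (t / 2 : ℕ)) * (b - (t / 2 : ℕ) + 1)) / (t - b + 1)) / (4 * √t)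
      ≤ exp (-(d * (d + 1)) / (t - b + 1)) * (t.choose (t / 2) / 2 ^ t) := by
        rw [div_eq_mul_one_div]
        gcongr
        exact (Nat.cast_nonneg d).trans hd
    _ ≤ t.choose (t / 2 + d) / 2 ^ t := by
        rw [mul_div, mul_comm]; gcongr

end Nat

theorem PMF.card_nsmul_le_toMeasure {α : Type*} [MeasurableSpace α] [MeasurableSingletonClass α]
    (p : PMF α) {T : Finset α} {S : Set α} (hTS : ↑T ⊆ S) {g : ENNReal}
    (hg : ∀ x ∈ T, g ≤ p x) :
    T.card • g ≤ p.toMeasure S :=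
  calc T.card • g ≤ ∑ x ∈ T, p x := Finset.card_nsmul_le_sum T _ _ hg
    _ = p.toMeasure T := (p.toMeasure_apply_finset T).symm
    _ ≤ p.toMeasure S := measure_mono hTS

theorem PMF.binomial_half_apply (t : ℕ) (i : Fin (t + 1)) :
    PMF.binomial (1/2) (by norm_num) t i = ENNReal.ofReal (t.choose i / 2 ^ t) := by
  rw [PMF.binomial_apply]
  simp only [one_div, ne_eq, OfNat.ofNat_ne_zero, not_false_eq_true, ENNReal.coe_inv,
    ENNReal.coe_ofNat, ENNReal.one_sub_inv_two, Fin.val_last]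
  rw [← pow_add, Nat.add_sub_cancel' i.is_le, ENNReal.ofReal_div_of_pos (by positivity),
    ENNReal.ofReal_natCast, ENNReal.ofReal_pow zero_le_two, ENNReal.ofReal_ofNat,
    ENNReal.div_eq_inv_mul, ENNReal.inv_pow]

theorem PMF.ofReal_le_binomial_half_toMeasure_setOf_le {t a b : ℕ} (ht : 2 ≤ t)
    (ha : t / 2 ≤ a) (hab : a ≤ b) (hbt : b ≤ t) :
    ENNReal.ofReal ((b - a + 1) *
        (exp (-((b - (t / 2 : ℕ)) * (b - (t / 2 : ℕ) + 1)) / (t - b + 1)) / (4 * √t))) ≤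
      (PMF.binomial (1/2) (by norm_num) t).toMeasure {i | a ≤ (i : ℕ)} := by
  set g := exp (-((b - (t / 2 : ℕ)) * (b - (t / 2 : ℕ) + 1)) / (t - b + 1)) / (4 * √t)
  let T := (Finset.Icc a b).attachFin (n := t + 1) fun k hk => by
    rw [Finset.mem_Icc] at hk; omega
  have hcard : (T.card : ℝ) = b - a + 1 := by
    rw [Finset.card_attachFin, Nat.card_Icc, Nat.cast_sub (by omega)]; push_cast; ring
  have hTS : ↑T ⊆ {i : Fin (t + 1) | a ≤ (i : ℕ)} := fun i hi => by
    simp only [T, Finset.mem_coe, Finset.mem_attachFin, Finset.mem_Icc] at hi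
    exact hi.1
  have hterm : ∀ i ∈ T, ENNReal.ofReal g ≤ PMF.binomial (1/2) (by norm_num) t i := by
    intro i hi
    simp only [T, Finset.mem_attachFin, Finset.mem_Icc] at hi
    rw [binomial_half_apply]
    exact ENNReal.ofReal_le_ofReal
      (Nat.exp_neg_div_le_choose_div_two_pow ht (ha.trans hi.1) hi.2 hbt)
  calc ENNReal.ofReal ((b - a + 1) * g) = T.card • ENNReal.ofReal g := by
        rw [← hcard, ENNReal.ofReal_mul (by positivity), ENNReal.ofReal_natCast, nsmul_eq_mul]
    _ ≤ _ := card_nsmul_le_toMeasure _ hTS hterm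


theorem mul_add_one_div_le_nine_halves_mul_sub_three {t ε B D : ℝ} (hε : 0 < ε)
    (hε2 : ε ≤ 1/2) (h6 : 6 ≤ ε ^ 2 * t) (hB0 : 0 ≤ B) (hB : B ≤ 5 * ε * t / 8 + 3 / 2)
    (hD : t / 2 - 5 * ε * t / 8 ≤ D) :
    B * (B + 1) / D ≤ 9 / 2 * (ε ^ 2 * t) - 3 := by
  have ht : 24 ≤ t := by nlinarith
  have hεt : 12 ≤ ε * t := by nlinarith
  have hD0 : 0 < t / 2 - 5 * ε * t / 8 := by nlinarith
  rw [div_le_iff₀ (hD0.trans_le hD)]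
  calc B * (B + 1) ≤ (5 * ε * t / 8 + 3 / 2) * (5 * ε * t / 8 + 5 / 2) :=
        mul_le_mul hB (by linarith) (by linarith) (by positivity)
    _ ≤ (9 / 2 * (ε ^ 2 * t) - 3) * (t / 2 - 5 * ε * t / 8) := by
        nlinarith [mul_nonneg (sub_nonneg.2 hε2) (sq_nonneg (ε * t)),
          mul_nonneg (sub_nonneg.2 h6) (by linarith : (0 : ℝ) ≤ t)]
    _ ≤ (9 / 2 * (ε ^ 2 * t) - 3) * D := by gcongr; linarith

theorem exp_neg_three_le_div {x : ℝ} (hx : 0 ≤ x) (h6 : 6 ≤ x ^ 2) : exp (-3) ≤ x / 32 := by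
  have hx' : 12 / 5 ≤ x := by nlinarith
  have he : 16 ≤ exp 3 := by
    calc (16 : ℝ) ≤ 2.7 ^ 3 := by norm_num
      _ ≤ exp 1 ^ 3 := pow_le_pow_left₀ (by norm_num) (by linarith [exp_one_gt_d9]) 3
      _ = exp 3 := by rw [← exp_nat_mul]; norm_num
  rw [exp_neg, inv_le_iff_one_le_mul₀' (exp_pos 3)]
  nlinarith

theorem exp_neg_nine_mul_sq_mul_div_two_le {t ε M B D : ℝ} (hε : 0 < ε) (hε2 : ε ≤ 1/2)
    (h6 : 6 ≤ ε ^ 2 * t) (hM : ε * t / 8 ≤ M) (hB0 : 0 ≤ B)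
    (hB : B ≤ 5 * ε * t / 8 + 3 / 2)
    (hD : t / 2 - 5 * ε * t / 8 ≤ D) :
    exp (-(9 * ε ^ 2 * t) / 2) ≤ M * (exp (-(B * (B + 1)) / D) / (4 * √t)) := by
  have ht : 0 < t := by nlinarith
  have hE := mul_add_one_div_le_nine_halves_mul_sub_three hε hε2 h6 hB0 hB hD
  calc exp (-(9 * ε ^ 2 * t) / 2) = exp (-3) * exp (-(9 / 2 * (ε ^ 2 * t) - 3)) := by
        rw [← exp_add]; ring_nf
    _ ≤ ε * √t / 32 * exp (-(B * (B + 1)) / D) := by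
        gcongr
        · exact exp_neg_three_le_div (by positivity) (by rwa [mul_pow, sq_sqrt ht.le])
        · rw [neg_div]; exact neg_le_neg hE
    _ = ε * t / 8 * (exp (-(B * (B + 1)) / D) / (4 * √t)) := by
        have := sqrt_pos.2 ht
        field_simp; rw [sq_sqrt ht.le]; ring
    _ ≤ M * (exp (-(B * (B + 1)) / D) / (4 * √t)) := by gcongr

theorem reverse_chernoff_upper_tail (t : ℕ) (ε : ℝ) (hε : 0 < ε) (hε2 : ε ≤ 1/2)
    (h6 : ε ^ 2 * t ≥ 6) :
    (PMF.binomial (1/2) (by norm_num) t).toMeasure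
        {i : Fin (t + 1) | ((i : ℕ) : ℝ) ≥ (t / 2) * (1 + ε)} ≥
      ENNReal.ofReal (Real.exp (-(9 * ε ^ 2 * t) / 2)) := by
  have ht : (24 : ℝ) ≤ t := by nlinarith [(by nlinarith : ε ^ 2 ≤ 1 / 4)]
  have hεt : ε * t ≤ t / 2 := by nlinarith
  set a := ⌈(t / 2 : ℝ) * (1 + ε)⌉₊
  set m := ⌊ε * t / 8⌋₊
  have ha : (a : ℝ) < t / 2 * (1 + ε) + 1 := Nat.ceil_lt_add_one (by positivity)
  have hm : ε * t / 8 < m + 1 := Nat.lt_floor_add_one _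
  have hm' : (m : ℝ) ≤ ε * t / 8 := Nat.floor_le (by positivity)
  have hc : (t : ℝ) ≤ 2 * (t / 2 : ℕ) + 1 := by
    exact_mod_cast (by omega : t ≤ 2 * (t / 2) + 1)
  have hta : ((t / 2 : ℕ) : ℝ) ≤ a := calc
    ((t / 2 : ℕ) : ℝ) ≤ t / 2 := Nat.cast_div_le
    _ ≤ t / 2 * (1 + ε) := by nlinarith
    _ ≤ a := Nat.le_ceil _
  have hbt : a + m ≤ t := by exact_mod_cast (by push_cast; linarith : ((a + m : ℕ) : ℝ) ≤ t)
  refine le_trans ?_ (measure_mono fun i (hi : a ≤ (i : ℕ)) => Nat.ceil_le.1 hi)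
  refine le_trans (ENNReal.ofReal_le_ofReal ?_) (PMF.ofReal_le_binomial_half_toMeasure_setOf_le
    (by exact_mod_cast ht.trans' (by norm_num : (2 : ℝ) ≤ 24)) (by exact_mod_cast hta)
    le_self_add hbt)
  apply exp_neg_nine_mul_sq_mul_div_two_le hε hε2 h6 <;> push_cast <;> linarith
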